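/- Let p be a prime with p ≥ 5 and let G be the affine group of the field 𝔽_p, i.e. the set 𝔽_p × 𝔽_pˣ with multiplication (a,b)·(c,d) = (a + bc, bd). Then there exists an element x ∈ G such that no group automorphism α of G satisfies α(x) = x⁻¹. -/

import Mathlib

/-!
Take `x = (0, g)` with `g ∈ 𝔽_pˣ` and `g⁻¹ ≠ g` (a generator, of order `p - 1 > 2`).
An automorphism `α` maps translations `(c, 1)` to translations, since these have order `p`,
prime to `|𝔽_pˣ|`; as they are the multiples of `(1, 1)`, `α (c, 1) = (c t, 1)` with `t ≠ 0`.
Conjugation by `x` multiplies translations by `g`. If `α x = x⁻¹`, applying `α` shows that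
conjugation by `x⁻¹` also multiplies them by `g`, whereas it multiplies them by `g⁻¹`.
-/

/-- The affine group of a field `F`: the set `F × Fˣ` with multiplication
`(a,b)·(c,d) = (a + bc, bd)`. -/
@[ext]
structure Aff (F : Type*) [Field F] where
  a : F
  b : Fˣ

namespace Aff

variable {F : Type*} [Field F]

instance : Mul (Aff F) := ⟨fun z w => ⟨z.a + (z.b : F) * w.a, z.b * w.b⟩⟩
instance : One (Aff F) := ⟨⟨0, 1⟩⟩
instance : Inv (Aff F) := ⟨fun z => ⟨-(((z.b⁻¹ : Fˣ) : F) * z.a), z.b⁻¹⟩⟩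

lemma mul_def (z w : Aff F) : z * w = ⟨z.a + (z.b : F) * w.a, z.b * w.b⟩ := rfl
lemma one_def : (1 : Aff F) = ⟨0, 1⟩ := rfl
lemma inv_def (z : Aff F) : z⁻¹ = ⟨-(((z.b⁻¹ : Fˣ) : F) * z.a), z.b⁻¹⟩ := rfl

instance : Group (Aff F) where
  mul_assoc z w u := by
    simp only [mul_def, Aff.mk.injEq, Units.val_mul]
    exact ⟨by ring, mul_assoc _ _ _⟩
  one_mul z := by
    obtain ⟨za, zb⟩ := z
    simp [mul_def, one_def]
  mul_one z := by
    obtain ⟨za, zb⟩ := z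
    simp [mul_def, one_def]
  inv_mul_cancel z := by
    simp only [mul_def, inv_def, one_def, Aff.mk.injEq]
    exact ⟨by simp, inv_mul_cancel z.b⟩

end Aff

/-- The automorphism of the affine group induced by a ring automorphism `φ` of `F`,
given by `(a,b) ↦ (φ(a), φ(b))`. -/
def affMap {F : Type*} [Field F] (φ : F ≃+* F) (h : Aff F) : Aff F :=
  ⟨φ h.a, Units.map (φ : F →+* F).toMonoidHom h.b⟩

namespace Aff

section Field

variable {F : Type*} [Field F]

lemma b_pow (z : Aff F) (n : ℕ) : (z ^ n).b = z.b ^ n := by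
  induction n with
  | zero => simp [one_def]
  | succ n ih => rw [pow_succ, pow_succ, mul_def, ih]

lemma mk_one_pow (c : F) (n : ℕ) : (⟨c, 1⟩ : Aff F) ^ n = ⟨n * c, 1⟩ := by
  induction n with
  | zero => simp [one_def]
  | succ n ih =>
    rw [pow_succ, ih, mul_def]
    ext <;> simp [add_mul]

lemma mk_zero_inv (g : Fˣ) : (⟨0, g⟩ : Aff F)⁻¹ = ⟨0, g⁻¹⟩ := by
  simp [inv_def]

lemma mk_zero_mul_mk_one_mul_inv (g : Fˣ) (c : F) :
    (⟨0, g⟩ : Aff F) * ⟨c, 1⟩ * (⟨0, g⟩ : Aff F)⁻¹ = ⟨g * c, 1⟩ := by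
  rw [mk_zero_inv, mul_def, mul_def]
  ext <;> simp

/-- Translations have order dividing `q = card F`, while `u ^ q = u` for `u : Fˣ`. -/
lemma b_map_mk_one [Fintype F] (α : Aff F →* Aff F) (c : F) : (α ⟨c, 1⟩).b = 1 := by
  have hpow : (⟨c, 1⟩ : Aff F) ^ Fintype.card F = 1 := by
    rw [mk_one_pow, FiniteField.cast_card_eq_zero, zero_mul, one_def]
  have hb : (α ⟨c, 1⟩).b ^ Fintype.card F = 1 := by
    rw [← b_pow, ← map_pow, hpow, map_one]
    rfl
  ext
  rw [← FiniteField.pow_card ((α ⟨c, 1⟩).b : F), ← Units.val_pow_eq_pow_val, hb]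

end Field

section ZMod

variable {p : ℕ} [Fact p.Prime]

lemma map_mk_one (α : Aff (ZMod p) →* Aff (ZMod p)) (c : ZMod p) :
    α ⟨c, 1⟩ = ⟨c * (α ⟨1, 1⟩).a, 1⟩ := by
  have hc : (⟨c, 1⟩ : Aff (ZMod p)) = ⟨1, 1⟩ ^ c.val := by
    rw [mk_one_pow, ZMod.natCast_zmod_val, mul_one]
  have h1 : α ⟨1, 1⟩ = ⟨(α ⟨1, 1⟩).a, 1⟩ := Aff.ext rfl (b_map_mk_one α 1)
  rw [hc, map_pow, h1, mk_one_pow, ZMod.natCast_zmod_val]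

lemma inv_eq_self_of_map_eq_inv (α : Aff (ZMod p) ≃* Aff (ZMod p)) (g : (ZMod p)ˣ)
    (hα : α ⟨0, g⟩ = (⟨0, g⟩ : Aff (ZMod p))⁻¹) : g⁻¹ = g := by
  set t := (α ⟨1, 1⟩).a
  have hmap (c : ZMod p) : α ⟨c, 1⟩ = ⟨c * t, 1⟩ := map_mk_one α.toMonoidHom c
  have ht : t ≠ 0 := by
    intro h0
    have h1 : α ⟨1, 1⟩ = α 1 := by rw [hmap, h0, mul_zero, map_one, one_def]
    simpa [one_def] using congrArg Aff.a (α.injective h1)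
  have hconj : (⟨0, g⁻¹⟩ : Aff (ZMod p)) * ⟨t, 1⟩ * (⟨0, g⁻¹⟩ : Aff (ZMod p))⁻¹ = ⟨g * t, 1⟩ :=
    calc _ = α (⟨0, g⟩ * ⟨1, 1⟩ * (⟨0, g⟩ : Aff (ZMod p))⁻¹) := by
          rw [map_mul, map_mul, map_inv, hα, inv_inv, mk_zero_inv, hmap, one_mul, mk_zero_inv,
            inv_inv]
      _ = ⟨g * t, 1⟩ := by rw [mk_zero_mul_mk_one_mul_inv, mul_one, hmap]
  rw [mk_zero_mul_mk_one_mul_inv] at hconj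
  exact Units.ext (mul_right_cancel₀ ht (congrArg Aff.a hconj))

end ZMod

end Aff

lemma IsCyclic.exists_inv_ne_self {G : Type*} [Group G] [Finite G] [IsCyclic G]
    (hG : 2 < Nat.card G) : ∃ g : G, g⁻¹ ≠ g := by
  obtain ⟨g, hg⟩ := IsCyclic.exists_ofOrder_eq_natCard (α := G)
  refine ⟨g, fun hinv => ?_⟩
  have hdvd : orderOf g ∣ 2 := orderOf_dvd_of_pow_eq_one <| by
    rw [pow_two]
    nth_rewrite 1 [← hinv]
    exact inv_mul_cancel g
  have := Nat.le_of_dvd two_pos hdvd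
  omega

/-- For a prime `p ≥ 5`, the affine group of `𝔽_p` contains an element `x`
such that no group automorphism maps `x` to `x⁻¹`. -/
theorem stmt_17 (p : ℕ) [Fact p.Prime] (hp5 : 5 ≤ p) :
    ∃ x : Aff (ZMod p), ∀ α : Aff (ZMod p) ≃* Aff (ZMod p), α x ≠ x⁻¹ := by
  have hcard : 2 < Nat.card (ZMod p)ˣ := by
    rw [Nat.card_eq_fintype_card, ZMod.card_units]
    omega
  obtain ⟨g, hg⟩ := IsCyclic.exists_inv_ne_self hcard
  exact ⟨⟨0, g⟩, fun α hα => hg (Aff.inv_eq_self_of_map_eq_inv α g hα)⟩
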